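/- arXiv:2002.05933 — 3 statements merged into one kernel-verified Lean document; each statement's English description precedes it below -/
import Mathlib

section
/- Let R > 0, D ⊂ ℝ^d, and F : closure(B_R) × D → closure(B_R) be continuous with ‖F(u,w) − F(v,w)‖ ≤ r‖u−v‖ for all u,v ∈ closure(B_R), w ∈ D, where 0 < r < 1. Then for every input sequence z : ℤ₋ → D there exists a unique sequence x : ℤ₋ → closure(B_R) satisfying x_t = F(x_{t−1}, z_t) for all t ∈ ℤ₋. -/
open MeasureTheory Metric BoundedContinuousFunction

variable {N d : ℕ}

/-- Auxiliary: one step of the reservoir map on bounded state sequences. -/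
noncomputable def esnStep (R : ℝ) (D : Set (EuclideanSpace ℝ (Fin d)))
    (F : EuclideanSpace ℝ (Fin N) → EuclideanSpace ℝ (Fin d) → EuclideanSpace ℝ (Fin N))
    (hmap : ∀ u ∈ closedBall (0 : EuclideanSpace ℝ (Fin N)) R, ∀ w ∈ D,
      F u w ∈ closedBall (0 : EuclideanSpace ℝ (Fin N)) R)
    (hR : 0 < R)
    (z : ℤ → EuclideanSpace ℝ (Fin d)) (hz : ∀ t : ℤ, t ≤ 0 → z t ∈ D)
    (f : ℤ →ᵇ (closedBall (0 : EuclideanSpace ℝ (Fin N)) R)) :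
    ℤ →ᵇ (closedBall (0 : EuclideanSpace ℝ (Fin N)) R) :=
  BoundedContinuousFunction.mk
    ⟨fun t => ⟨F ((f (t - 1)) : EuclideanSpace ℝ (Fin N)) (z (min t 0)),
      hmap _ (f (t - 1)).2 _ (hz _ (min_le_right t 0))⟩, continuous_of_discreteTopology⟩
    ⟨2 * R, by
      intro s t
      rw [Subtype.dist_eq]
      calc dist (F ((f (s - 1)) : EuclideanSpace ℝ (Fin N)) (z (min s 0)))
            (F ((f (t - 1)) : EuclideanSpace ℝ (Fin N)) (z (min t 0)))
          ≤ dist (F ((f (s - 1)) : EuclideanSpace ℝ (Fin N)) (z (min s 0))) 0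
            + dist (F ((f (t - 1)) : EuclideanSpace ℝ (Fin N)) (z (min t 0))) 0 :=
            dist_triangle_right _ _ _
        _ ≤ R + R := add_le_add
            (mem_closedBall.mp (hmap _ (f (s-1)).2 _ (hz _ (min_le_right s 0))))
            (mem_closedBall.mp (hmap _ (f (t-1)).2 _ (hz _ (min_le_right t 0))))
        _ = 2 * R := by ring⟩

/-- Echo state property for contractive reservoir systems: if
`F : closedBall(0,R) × D → closedBall(0,R)` is continuous and a uniform
`r`-contraction (`0 < r < 1`) in its first argument, then for every input
sequence `z : ℤ₋ → D` there is a unique state sequence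
`x : ℤ₋ → closedBall(0,R)` with `x t = F (x (t-1)) (z t)` for all `t ≤ 0`. -/
theorem stmt12 (N d : ℕ) (R : ℝ) (hR : 0 < R) (r : ℝ) (hr0 : 0 < r) (hr1 : r < 1)
    (D : Set (EuclideanSpace ℝ (Fin d)))
    (F : EuclideanSpace ℝ (Fin N) → EuclideanSpace ℝ (Fin d) → EuclideanSpace ℝ (Fin N))
    (hmap : ∀ u ∈ closedBall (0 : EuclideanSpace ℝ (Fin N)) R, ∀ w ∈ D,
      F u w ∈ closedBall (0 : EuclideanSpace ℝ (Fin N)) R)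
    (hcont : ContinuousOn (Function.uncurry F)
      ((closedBall (0 : EuclideanSpace ℝ (Fin N)) R) ×ˢ D))
    (hcontr : ∀ u ∈ closedBall (0 : EuclideanSpace ℝ (Fin N)) R,
      ∀ v ∈ closedBall (0 : EuclideanSpace ℝ (Fin N)) R, ∀ w ∈ D,
        ‖F u w - F v w‖ ≤ r * ‖u - v‖)
    (z : ℤ → EuclideanSpace ℝ (Fin d)) (hz : ∀ t : ℤ, t ≤ 0 → z t ∈ D) :
    ∃ x : ℤ → EuclideanSpace ℝ (Fin N),
      (∀ t : ℤ, t ≤ 0 → x t ∈ closedBall (0 : EuclideanSpace ℝ (Fin N)) R) ∧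
      (∀ t : ℤ, t ≤ 0 → x t = F (x (t - 1)) (z t)) ∧
      (∀ y : ℤ → EuclideanSpace ℝ (Fin N),
        (∀ t : ℤ, t ≤ 0 → y t ∈ closedBall (0 : EuclideanSpace ℝ (Fin N)) R) →
        (∀ t : ℤ, t ≤ 0 → y t = F (y (t - 1)) (z t)) →
        ∀ t : ℤ, t ≤ 0 → y t = x t) := by
  classical
  haveI : CompleteSpace (closedBall (0 : EuclideanSpace ℝ (Fin N)) R) :=
    (Metric.isClosed_closedBall).completeSpace_coe
  haveI : Nonempty (closedBall (0 : EuclideanSpace ℝ (Fin N)) R) :=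
    ⟨⟨0, mem_closedBall_self hR.le⟩⟩
  haveI : Nonempty (ℤ →ᵇ (closedBall (0 : EuclideanSpace ℝ (Fin N)) R)) :=
    ⟨BoundedContinuousFunction.const ℤ ⟨0, mem_closedBall_self hR.le⟩⟩
  set Φ := esnStep R D F hmap hR z hz with hΦdef
  have hΦapp : ∀ f, ∀ t : ℤ,
      ((Φ f t : EuclideanSpace ℝ (Fin N))) = F ((f (t - 1)) : EuclideanSpace ℝ (Fin N)) (z (min t 0)) :=
    fun f t => rfl
  have hzD : ∀ t : ℤ, z (min t 0) ∈ D := fun t => hz _ (min_le_right t 0)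
  have hcontract : ContractingWith ⟨r, hr0.le⟩ Φ := by
    constructor
    · exact_mod_cast hr1
    · apply LipschitzWith.of_dist_le_mul
      intro f g
      rw [BoundedContinuousFunction.dist_le (by positivity)]
      intro t
      rw [Subtype.dist_eq, hΦapp, hΦapp, dist_eq_norm]
      calc ‖F ((f (t - 1)) : EuclideanSpace ℝ (Fin N)) (z (min t 0))
            - F ((g (t - 1)) : EuclideanSpace ℝ (Fin N)) (z (min t 0))‖
          ≤ r * ‖((f (t - 1)) : EuclideanSpace ℝ (Fin N)) - ((g (t - 1)) : EuclideanSpace ℝ (Fin N))‖ :=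
            hcontr _ (f (t-1)).2 _ (g (t-1)).2 _ (hzD t)
        _ ≤ r * dist f g := by
            rw [← dist_eq_norm, ← Subtype.dist_eq]
            exact mul_le_mul_of_nonneg_left
              (BoundedContinuousFunction.dist_coe_le_dist _) hr0.le
  set xf := ContractingWith.fixedPoint Φ hcontract with hxf
  have hfix : Φ xf = xf := ContractingWith.fixedPoint_isFixedPt hcontract
  refine ⟨fun t => (xf t : EuclideanSpace ℝ (Fin N)), fun t _ => (xf t).2, ?_, ?_⟩
  · intro t ht
    have h1 : ((Φ xf t : EuclideanSpace ℝ (Fin N))) = ((xf t : EuclideanSpace ℝ (Fin N))) := by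
      rw [hfix]
    rw [hΦapp, min_eq_left ht] at h1
    exact h1.symm
  · intro y hy hyrec t ht
    have key : ∀ n : ℕ, ∀ t : ℤ, t ≤ 0 →
        ‖y t - (xf t : EuclideanSpace ℝ (Fin N))‖ ≤ r ^ n * (2 * R) := by
      intro n
      induction n with
      | zero =>
        intro t ht
        calc ‖y t - (xf t : EuclideanSpace ℝ (Fin N))‖
            ≤ ‖y t‖ + ‖(xf t : EuclideanSpace ℝ (Fin N))‖ := norm_sub_le _ _
          _ ≤ R + R := add_le_add
              (mem_closedBall_zero_iff.mp (hy t ht))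
              (mem_closedBall_zero_iff.mp (xf t).2)
          _ = r ^ 0 * (2 * R) := by ring
      | succ n ih =>
        intro t ht
        have hxeq : (xf t : EuclideanSpace ℝ (Fin N)) = F (xf (t - 1) : EuclideanSpace ℝ (Fin N)) (z t) := by
          have h1 : ((Φ xf t : EuclideanSpace ℝ (Fin N))) = ((xf t : EuclideanSpace ℝ (Fin N))) := by
            rw [hfix]
          rw [hΦapp, min_eq_left ht] at h1
          exact h1.symm
        have ht1 : t - 1 ≤ 0 := by omega
        calc ‖y t - (xf t : EuclideanSpace ℝ (Fin N))‖
            = ‖F (y (t-1)) (z t) - F (xf (t-1) : EuclideanSpace ℝ (Fin N)) (z t)‖ := by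
              rw [hyrec t ht, hxeq]
          _ ≤ r * ‖y (t-1) - (xf (t-1) : EuclideanSpace ℝ (Fin N))‖ :=
              hcontr _ (hy _ ht1) _ (xf (t-1)).2 _ (hz t ht)
          _ ≤ r * (r ^ n * (2 * R)) :=
              mul_le_mul_of_nonneg_left (ih _ ht1) hr0.le
          _ = r ^ (n + 1) * (2 * R) := by ring
    have hlim : Filter.Tendsto (fun n : ℕ => r ^ n * (2 * R)) Filter.atTop (nhds 0) := by
      have := (tendsto_pow_atTop_nhds_zero_of_lt_one hr0.le hr1).mul_const (2 * R)
      simpa using this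
    have h0 : ‖y t - (xf t : EuclideanSpace ℝ (Fin N))‖ ≤ 0 :=
      ge_of_tendsto' hlim (fun n => key n t ht)
    have h1 := le_antisymm h0 (norm_nonneg _)
    rw [norm_eq_zero, sub_eq_zero] at h1
    exact h1
end

section
/- Let F : closure(B_ρ) × D → closure(B_ρ) satisfy: for each z ∈ D, F(·,z) is an r-contraction (0 < r < 1), and for each x, F(x,·) is L_F-Lipschitz; let h : closure(B_ρ) → ℝ be L_h-Lipschitz. Then the reservoir functional H* = h ∘ H_F satisfies |H*(u) − H*(v)| ≤ L_h L_F ∑_{k=0}^∞ r^k ‖u_{−k} − v_{−k}‖ for all input sequences u, v ∈ D^{ℤ₋}. -/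
open MeasureTheory Metric

/-! Feeding the two input sequences through the recursion `H(z) = F(H(z_{·-1}), z₀)` `k` steps into
the past gives `‖H u - H v‖ ≤ L_F ∑_{i<k} rⁱ ‖u_{-i} - v_{-i}‖ + r^k ‖H(u shifted k) - H(v shifted k)‖`.
The states live in a bounded set, so the remainder is `O(r^k)` and vanishes in the limit; composing
with the Lipschitz readout finishes the proof. -/

theorem le_tsum_pow_mul_of_le_mul_succ_add {r B : ℝ} {e c : ℕ → ℝ} (hr0 : 0 ≤ r) (hr1 : r < 1)
    (he : ∀ k, e k ≤ B) (hstep : ∀ k, e k ≤ r * e (k + 1) + c k)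
    (hc : Summable fun k => r ^ k * c k) :
    e 0 ≤ ∑' k, r ^ k * c k := by
  have hpartial : ∀ N, e 0 ≤ ∑ k ∈ Finset.range N, r ^ k * c k + r ^ N * e N := by
    intro N
    induction N with
    | zero => simp
    | succ N ih =>
      calc e 0 ≤ ∑ k ∈ Finset.range N, r ^ k * c k + r ^ N * e N := ih
        _ ≤ ∑ k ∈ Finset.range N, r ^ k * c k + r ^ N * (r * e (N + 1) + c N) := by
          gcongr; exact hstep N
        _ = ∑ k ∈ Finset.range (N + 1), r ^ k * c k + r ^ (N + 1) * e (N + 1) := by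
          rw [Finset.sum_range_succ]; ring
  have hlim : Filter.Tendsto (fun N => ∑ k ∈ Finset.range N, r ^ k * c k + r ^ N * B)
      Filter.atTop (nhds (∑' k, r ^ k * c k + 0 * B)) :=
    hc.hasSum.tendsto_sum_nat.add
      ((tendsto_pow_atTop_nhds_zero_of_lt_one hr0 hr1).mul_const B)
  rw [zero_mul, add_zero] at hlim
  refine ge_of_tendsto hlim (Filter.Eventually.of_forall fun N => (hpartial N).trans ?_)
  gcongr
  exact he N

section Reservoir

variable {X Z : Type*} [SeminormedAddCommGroup X] [SeminormedAddCommGroup Z]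
  {S : Set X} {D : Set Z} {F : X → Z → X} {HF : (ℤ → Z) → X} {r LF : ℝ}

theorem norm_sub_le_of_contracting_of_lipschitz
    (hcontr : ∀ x ∈ S, ∀ y ∈ S, ∀ z ∈ D, ‖F x z - F y z‖ ≤ r * ‖x - y‖)
    (hlipF : ∀ x ∈ S, ∀ z ∈ D, ∀ z' ∈ D, ‖F x z - F x z'‖ ≤ LF * ‖z - z'‖)
    {x y : X} {z z' : Z} (hx : x ∈ S) (hy : y ∈ S) (hz : z ∈ D) (hz' : z' ∈ D) :
    ‖F x z - F y z'‖ ≤ r * ‖x - y‖ + LF * ‖z - z'‖ :=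
  calc ‖F x z - F y z'‖ ≤ ‖F x z - F y z‖ + ‖F y z - F y z'‖ := norm_sub_le_norm_sub_add_norm_sub _ _ _
    _ ≤ r * ‖x - y‖ + LF * ‖z - z'‖ := add_le_add (hcontr x hx y hy z hz) (hlipF y hy z hz z' hz')

variable
    (hcontr : ∀ x ∈ S, ∀ y ∈ S, ∀ z ∈ D, ‖F x z - F y z‖ ≤ r * ‖x - y‖)
    (hlipF : ∀ x ∈ S, ∀ z ∈ D, ∀ z' ∈ D, ‖F x z - F x z'‖ ≤ LF * ‖z - z'‖)
    (hHFmem : ∀ z : ℤ → Z, (∀ t, z t ∈ D) → HF z ∈ S)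
    (hHFfix : ∀ z : ℤ → Z, (∀ t, z t ∈ D) → HF z = F (HF fun t => z (t - 1)) (z 0))
include hcontr hlipF hHFmem hHFfix

theorem norm_echo_sub_le_shift {u v : ℤ → Z} (hu : ∀ t, u t ∈ D) (hv : ∀ t, v t ∈ D) :
    ‖HF u - HF v‖ ≤
      r * ‖HF (fun t => u (t - 1)) - HF (fun t => v (t - 1))‖ + LF * ‖u 0 - v 0‖ := by
  rw [hHFfix u hu, hHFfix v hv]
  exact norm_sub_le_of_contracting_of_lipschitz hcontr hlipF (hHFmem _ fun t => hu _)
    (hHFmem _ fun t => hv _) (hu 0) (hv 0)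

theorem norm_echo_sub_le_tsum (hr0 : 0 ≤ r) (hr1 : r < 1) (hS : Bornology.IsBounded S)
    {u v : ℤ → Z} (hu : ∀ t, u t ∈ D) (hv : ∀ t, v t ∈ D)
    (hsum : Summable fun k : ℕ => r ^ k * ‖u (-(k : ℤ)) - v (-(k : ℤ))‖) :
    ‖HF u - HF v‖ ≤ LF * ∑' k : ℕ, r ^ k * ‖u (-(k : ℤ)) - v (-(k : ℤ))‖ := by
  obtain ⟨B, hB⟩ := isBounded_iff.mp hS
  set e : ℕ → ℝ := fun k => ‖HF (fun t => u (t - k)) - HF (fun t => v (t - k))‖ with he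
  have hshift : ∀ (w : ℤ → Z) (k : ℕ), (fun t => w (t - 1 - k)) = fun t => w (t - (k + 1 : ℕ)) := by
    intro w k
    funext t
    push_cast
    ring_nf
  have hstep : ∀ k, e k ≤ r * e (k + 1) + LF * ‖u (-(k : ℤ)) - v (-(k : ℤ))‖ := by
    intro k
    have := norm_echo_sub_le_shift (r := r) (LF := LF) hcontr hlipF hHFmem hHFfix
      (u := fun t => u (t - k)) (v := fun t => v (t - k)) (fun t => hu _) (fun t => hv _)
    simpa only [he, hshift, zero_sub] using this
  have hbound : ∀ k, e k ≤ B := fun k => by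
    simpa only [he, dist_eq_norm] using hB (hHFmem _ fun t => hu _) (hHFmem _ fun t => hv _)
  have := le_tsum_pow_mul_of_le_mul_succ_add hr0 hr1 hbound hstep
    (by simpa only [mul_left_comm] using hsum.mul_left LF)
  simpa only [he, CharP.cast_eq_zero, sub_zero, mul_left_comm _ LF, tsum_mul_left] using this

end Reservoir

theorem stmt14_general (n d : ℕ) (ρ r LF Lh : ℝ)
    (hr0 : 0 < r) (hr1 : r < 1) (hLh : 0 < Lh)
    (D : Set (EuclideanSpace ℝ (Fin d)))
    (F : EuclideanSpace ℝ (Fin n) → EuclideanSpace ℝ (Fin d) → EuclideanSpace ℝ (Fin n))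
    (hcontr : ∀ x ∈ closedBall (0 : EuclideanSpace ℝ (Fin n)) ρ,
      ∀ y ∈ closedBall (0 : EuclideanSpace ℝ (Fin n)) ρ, ∀ z ∈ D,
        ‖F x z - F y z‖ ≤ r * ‖x - y‖)
    (hlipF : ∀ x ∈ closedBall (0 : EuclideanSpace ℝ (Fin n)) ρ, ∀ z ∈ D, ∀ z' ∈ D,
        ‖F x z - F x z'‖ ≤ LF * ‖z - z'‖)
    (h : EuclideanSpace ℝ (Fin n) → ℝ)
    (hliph : ∀ x ∈ closedBall (0 : EuclideanSpace ℝ (Fin n)) ρ,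
      ∀ y ∈ closedBall (0 : EuclideanSpace ℝ (Fin n)) ρ, |h x - h y| ≤ Lh * ‖x - y‖)
    (HF : (ℤ → EuclideanSpace ℝ (Fin d)) → EuclideanSpace ℝ (Fin n))
    (hHFball : ∀ z : ℤ → EuclideanSpace ℝ (Fin d), (∀ t, z t ∈ D) →
      HF z ∈ closedBall (0 : EuclideanSpace ℝ (Fin n)) ρ)
    (hHFfix : ∀ z : ℤ → EuclideanSpace ℝ (Fin d), (∀ t, z t ∈ D) →
      HF z = F (HF (fun t => z (t - 1))) (z 0)) :
    ∀ u v : ℤ → EuclideanSpace ℝ (Fin d),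
      (∀ t, u t ∈ D) → (∀ t, v t ∈ D) →
      Summable (fun k : ℕ => r ^ k * ‖u (-(k : ℤ)) - v (-(k : ℤ))‖) →
      |h (HF u) - h (HF v)| ≤ Lh * LF * ∑' k : ℕ, r ^ k * ‖u (-(k : ℤ)) - v (-(k : ℤ))‖ := by
  intro u v hu hv hsum
  calc |h (HF u) - h (HF v)| ≤ Lh * ‖HF u - HF v‖ := hliph _ (hHFball u hu) _ (hHFball v hv)
    _ ≤ Lh * (LF * ∑' k : ℕ, r ^ k * ‖u (-(k : ℤ)) - v (-(k : ℤ))‖) := by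
      gcongr
      exact norm_echo_sub_le_tsum hcontr hlipF hHFball hHFfix hr0.le hr1 isBounded_closedBall
        hu hv hsum
    _ = Lh * LF * ∑' k : ℕ, r ^ k * ‖u (-(k : ℤ)) - v (-(k : ℤ))‖ := (mul_assoc _ _ _).symm

/-- A reservoir functional generated by a state map that is an `r`-contraction
in the state and `L_F`-Lipschitz in the input, composed with an `L_h`-Lipschitz
readout, is `w`-Lipschitz with `w_{-k} = r^k` and constant `L_h L_F`. -/
theorem stmt14 (n d : ℕ) (ρ r LF Lh : ℝ)
    (hρ : 0 < ρ) (hr0 : 0 < r) (hr1 : r < 1) (hLF : 0 < LF) (hLh : 0 < Lh)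
    (D : Set (EuclideanSpace ℝ (Fin d)))
    (F : EuclideanSpace ℝ (Fin n) → EuclideanSpace ℝ (Fin d) → EuclideanSpace ℝ (Fin n))
    (hmap : ∀ x ∈ closedBall (0 : EuclideanSpace ℝ (Fin n)) ρ, ∀ z ∈ D,
      F x z ∈ closedBall (0 : EuclideanSpace ℝ (Fin n)) ρ)
    (hcontr : ∀ x ∈ closedBall (0 : EuclideanSpace ℝ (Fin n)) ρ,
      ∀ y ∈ closedBall (0 : EuclideanSpace ℝ (Fin n)) ρ, ∀ z ∈ D,
        ‖F x z - F y z‖ ≤ r * ‖x - y‖)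
    (hlipF : ∀ x ∈ closedBall (0 : EuclideanSpace ℝ (Fin n)) ρ, ∀ z ∈ D, ∀ z' ∈ D,
        ‖F x z - F x z'‖ ≤ LF * ‖z - z'‖)
    (h : EuclideanSpace ℝ (Fin n) → ℝ)
    (hliph : ∀ x ∈ closedBall (0 : EuclideanSpace ℝ (Fin n)) ρ,
      ∀ y ∈ closedBall (0 : EuclideanSpace ℝ (Fin n)) ρ, |h x - h y| ≤ Lh * ‖x - y‖)
    (HF : (ℤ → EuclideanSpace ℝ (Fin d)) → EuclideanSpace ℝ (Fin n))
    (hHFball : ∀ z : ℤ → EuclideanSpace ℝ (Fin d), (∀ t, z t ∈ D) →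
      HF z ∈ closedBall (0 : EuclideanSpace ℝ (Fin n)) ρ)
    (hHFfix : ∀ z : ℤ → EuclideanSpace ℝ (Fin d), (∀ t, z t ∈ D) →
      HF z = F (HF (fun t => z (t - 1))) (z 0)) :
    ∀ u v : ℤ → EuclideanSpace ℝ (Fin d),
      (∀ t, u t ∈ D) → (∀ t, v t ∈ D) →
      Summable (fun k : ℕ => r ^ k * ‖u (-(k : ℤ)) - v (-(k : ℤ))‖) →
      |h (HF u) - h (HF v)| ≤ Lh * LF * ∑' k : ℕ, r ^ k * ‖u (-(k : ℤ)) - v (-(k : ℤ))‖ :=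
  stmt14_general n d ρ r LF Lh hr0 hr1 hLh D F hcontr hlipF h hliph HF hHFball hHFfix
end

section
/- Let σ(x) = max(x,0) and let Ā ∈ M_{n,n}, c̄ ∈ M_{n,d}, ζ̄ ∈ ℝ^n. Define the doubled matrices A = [[Ā, −Ā],[−Ā, Ā]], C = [c̄; −c̄], ζ = [ζ̄; −ζ̄]. If x̄ : ℤ₋ → ℝ^n satisfies the linear recursion x̄_t = Ā x̄_{t−1} + c̄ z_t + ζ̄, then X_t = (σ(x̄_t), σ(−x̄_t)) satisfies the ReLU recursion X_t = σ(A X_{t−1} + C z_t + ζ). -/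
lemma relu_diff (a : ℝ) : max a 0 - max (-a) 0 = a := by
  rcases le_total a 0 with h | h
  · rw [max_eq_right h, max_eq_left (neg_nonneg.mpr h)]; ring
  · rw [max_eq_left h, max_eq_right (neg_nonpos.mpr h)]; ring

/-- Embedding a linear reservoir into a doubled ReLU network: if
`x̄_t = Ā x̄_{t-1} + c̄ z_t + ζ̄`, then `X_t = (σ(x̄_t), σ(−x̄_t))` satisfies the
ReLU recursion `X_t = σ(A X_{t-1} + C z_t + ζ)` with the doubled parameters
`A = [[Ā, −Ā],[−Ā, Ā]]`, `C = [c̄; −c̄]`, `ζ = [ζ̄; −ζ̄]`, by the identity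
`σ(a) − σ(−a) = a` for `σ(x) = max(x,0)`. -/
theorem stmt17 (n d : ℕ)
    (Abar : Matrix (Fin n) (Fin n) ℝ) (cbar : Matrix (Fin n) (Fin d) ℝ)
    (ζbar : Fin n → ℝ) (z : ℤ → Fin d → ℝ) (xbar : ℤ → Fin n → ℝ)
    (hrec : ∀ t : ℤ, t ≤ 0 →
      xbar t = Abar.mulVec (xbar (t - 1)) + cbar.mulVec (z t) + ζbar)
    (X : ℤ → (Fin n ⊕ Fin n) → ℝ)
    (hX : ∀ t : ℤ,
      X t = Sum.elim (fun i => max (xbar t i) 0) (fun i => max (-(xbar t i)) 0)) :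
    ∀ t : ℤ, t ≤ 0 →
      X t = fun j => max
        ((Matrix.fromBlocks Abar (-Abar) (-Abar) Abar).mulVec (X (t - 1)) j
          + Sum.elim (cbar.mulVec (z t)) (-(cbar.mulVec (z t))) j
          + Sum.elim ζbar (-ζbar) j) 0 := by
  intro t ht
  have hx := hrec t ht
  have hdiff : (fun i => max (xbar (t-1) i) 0) - (fun i => max (-(xbar (t-1) i)) 0)
      = xbar (t-1) := by
    funext i; exact relu_diff _
  have hdiff2 : (fun i => max (-(xbar (t-1) i)) 0) - (fun i => max (xbar (t-1) i) 0)
      = -(xbar (t-1)) := by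
    funext i
    have := relu_diff (xbar (t-1) i)
    simp only [Pi.sub_apply, Pi.neg_apply]
    linarith
  funext j
  rw [hX t, hX (t-1)]
  cases j with
  | inl i =>
      have : Matrix.mulVec (Matrix.fromBlocks Abar (-Abar) (-Abar) Abar)
          (Sum.elim (fun i => max (xbar (t-1) i) 0) (fun i => max (-(xbar (t-1) i)) 0))
          (Sum.inl i) = Abar.mulVec (xbar (t-1)) i := by
        rw [Matrix.fromBlocks_mulVec]
        simp only [Sum.elim_inl, Sum.elim_comp_inl, Sum.elim_comp_inr, Pi.add_apply,
          Matrix.neg_mulVec, Pi.neg_apply]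
        rw [← sub_eq_add_neg, ← Pi.sub_apply, ← Matrix.mulVec_sub, hdiff]
      rw [Sum.elim_inl, this, Sum.elim_inl, Sum.elim_inl, hx]
      simp
  | inr i =>
      have : Matrix.mulVec (Matrix.fromBlocks Abar (-Abar) (-Abar) Abar)
          (Sum.elim (fun i => max (xbar (t-1) i) 0) (fun i => max (-(xbar (t-1) i)) 0))
          (Sum.inr i) = -(Abar.mulVec (xbar (t-1)) i) := by
        rw [Matrix.fromBlocks_mulVec]
        simp only [Sum.elim_inr, Sum.elim_comp_inl, Sum.elim_comp_inr, Pi.add_apply,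
          Matrix.neg_mulVec, Pi.neg_apply]
        rw [neg_add_eq_sub, ← Pi.sub_apply, ← Matrix.mulVec_sub, hdiff2, Matrix.mulVec_neg]
        rfl
      rw [Sum.elim_inr, this, Sum.elim_inr, Sum.elim_inr, hx]
      simp only [Pi.add_apply, Pi.neg_apply]
      congr 1
      ring
end
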